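/- Let X ~ Q_f where Q_f has density f^{1/2} p_X / P_X(f^{1/2}) w.r.t. the reference measure, and suppose f(x) > 0 P_X-almost surely. Let C be Bernoulli with conditional success probability f*(X) given X, and define the estimator U = P_X(f^{1/2}) · C / f(X)^{1/2}. If f = f*, then E[U] = E_{P_X}[f*] and Var(U) = (∫ f*^{1/2} dP_X)² − (∫ f* dP_X)². -/

import Mathlib

/-!
Since `C ∈ {0,1}`, both `U` and `U²` have the form `g(X) · C`, and conditioning on `X` replaces
`C` by `f*(X)`. Reweighting by the density `√f*/I` then gives `E[U] = ∫ f* dP_X` and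
`E[U²] = ∫ (√f*/I) · (I²/f*) · f* dP_X = I ∫ √f* dP_X = I²`.
-/

open MeasureTheory ENNReal

theorem integral_comp_eq_integral_mul_of_map_eq_withDensity {α β : Type*} [MeasurableSpace α]
    [MeasurableSpace β] {μ : Measure β} {ν : Measure α} {X : α → β} (hX : Measurable X)
    {d : β → ℝ} (hd : Measurable d) (hd0 : ∀ x, 0 ≤ d x)
    (hlaw : ν.map X = μ.withDensity fun x => ENNReal.ofReal (d x)) {h : β → ℝ}
    (hh : Measurable h) :
    ∫ ω, h (X ω) ∂ν = ∫ x, d x * h x ∂μ := by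
  rw [← integral_map hX.aemeasurable hh.aestronglyMeasurable, hlaw,
    integral_withDensity_eq_integral_toReal_smul hd.ennreal_ofReal
      (Filter.Eventually.of_forall fun _ => ofReal_lt_top)]
  simp only [toReal_ofReal (hd0 _), smul_eq_mul]

theorem stmt_15_general {𝒳 : Type*} [MeasurableSpace 𝒳] (PX : Measure 𝒳)
    (fstar : 𝒳 → ℝ) (hf : Measurable fstar) (hf01 : ∀ x, fstar x ∈ Set.Icc (0:ℝ) 1)
    (hfpos : ∀ᵐ x ∂PX, 0 < fstar x)
    (I : ℝ) (hI : I = ∫ x, Real.sqrt (fstar x) ∂PX) (hIpos : 0 < I)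
    {Ω : Type*} [MeasurableSpace Ω] (ν : Measure Ω)
    (Xv : Ω → 𝒳) (hX : Measurable Xv)
    (hlaw : ν.map Xv = PX.withDensity (fun x => ENNReal.ofReal (Real.sqrt (fstar x) / I)))
    (C : Ω → ℝ) (hCbin : ∀ ω, C ω = 0 ∨ C ω = 1)
    (hcond : ∀ g : 𝒳 → ℝ, Measurable g →
      ∫ ω, g (Xv ω) * C ω ∂ν = ∫ ω, g (Xv ω) * fstar (Xv ω) ∂ν)
    (U : Ω → ℝ) (hU : ∀ ω, U ω = I * C ω / Real.sqrt (fstar (Xv ω))) :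
    (∫ ω, U ω ∂ν = ∫ x, fstar x ∂PX) ∧
      (∫ ω, (U ω) ^ 2 ∂ν - (∫ ω, U ω ∂ν) ^ 2
        = I ^ 2 - (∫ x, fstar x ∂PX) ^ 2) := by
  have reweight (g : 𝒳 → ℝ) (hg : Measurable g) :
      ∫ ω, g (Xv ω) * C ω ∂ν = ∫ x, √(fstar x) / I * (g x * fstar x) ∂PX := by
    rw [hcond g hg]
    exact integral_comp_eq_integral_mul_of_map_eq_withDensity hX (by fun_prop)
      (fun x => by positivity) hlaw (hg.mul hf)
  have hmean : ∫ ω, U ω ∂ν = ∫ x, fstar x ∂PX :=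
    calc ∫ ω, U ω ∂ν = ∫ ω, I / √(fstar (Xv ω)) * C ω ∂ν := by
          congr with ω; rw [hU]; ring
      _ = ∫ x, √(fstar x) / I * (I / √(fstar x) * fstar x) ∂PX :=
          reweight (fun x => I / √(fstar x)) (by fun_prop)
      _ = ∫ x, fstar x ∂PX := integral_congr_ae <| hfpos.mono fun x hx => by
          have hsqrt : 0 < √(fstar x) := Real.sqrt_pos.2 hx
          field_simp
  have hsecond : ∫ ω, U ω ^ 2 ∂ν = I ^ 2 :=
    calc ∫ ω, U ω ^ 2 ∂ν = ∫ ω, I ^ 2 / fstar (Xv ω) * C ω ∂ν := by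
          congr with ω
          have hC2 : C ω ^ 2 = C ω := by rcases hCbin ω with h | h <;> simp [h]
          rw [hU, div_pow, mul_pow, Real.sq_sqrt (hf01 _).1, hC2]; ring
      _ = ∫ x, √(fstar x) / I * (I ^ 2 / fstar x * fstar x) ∂PX :=
          reweight (fun x => I ^ 2 / fstar x) (by fun_prop)
      _ = ∫ x, I * √(fstar x) ∂PX := integral_congr_ae <| hfpos.mono fun x hx => by
          field_simp
      _ = I ^ 2 := by rw [integral_const_mul, ← hI, sq]
  exact ⟨hmean, by rw [hmean, hsecond]⟩

/-- Mean and variance of the AVF estimator with the perfect predictor: if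
`X ~ Q_{f*}` (density `f*^{1/2}/I` w.r.t. `P_X`, `I = ∫ f*^{1/2} dP_X`), `C` is
Bernoulli with conditional success probability `f*(X)`, and
`U = I · C / f*(X)^{1/2}`, then `E[U] = ∫ f* dP_X` and
`Var(U) = I² − (∫ f* dP_X)²`. -/
theorem stmt_15 {𝒳 : Type*} [MeasurableSpace 𝒳] (PX : Measure 𝒳) [IsProbabilityMeasure PX]
    (fstar : 𝒳 → ℝ) (hf : Measurable fstar) (hf01 : ∀ x, fstar x ∈ Set.Icc (0:ℝ) 1)
    (hfpos : ∀ᵐ x ∂PX, 0 < fstar x)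
    (I : ℝ) (hI : I = ∫ x, Real.sqrt (fstar x) ∂PX) (hIpos : 0 < I)
    {Ω : Type*} [MeasurableSpace Ω] (ν : Measure Ω) [IsProbabilityMeasure ν]
    (Xv : Ω → 𝒳) (hX : Measurable Xv)
    (hlaw : ν.map Xv = PX.withDensity (fun x => ENNReal.ofReal (Real.sqrt (fstar x) / I)))
    (C : Ω → ℝ) (hC : Measurable C) (hCbin : ∀ ω, C ω = 0 ∨ C ω = 1)
    (hcond : ∀ g : 𝒳 → ℝ, Measurable g →
      ∫ ω, g (Xv ω) * C ω ∂ν = ∫ ω, g (Xv ω) * fstar (Xv ω) ∂ν)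
    (U : Ω → ℝ) (hU : ∀ ω, U ω = I * C ω / Real.sqrt (fstar (Xv ω))) :
    (∫ ω, U ω ∂ν = ∫ x, fstar x ∂PX) ∧
      (∫ ω, (U ω) ^ 2 ∂ν - (∫ ω, U ω ∂ν) ^ 2
        = I ^ 2 - (∫ x, fstar x ∂PX) ^ 2) :=
  stmt_15_general PX fstar hf hf01 hfpos I hI hIpos ν Xv hX hlaw C hCbin hcond U hU
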